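/- arXiv:2506.18616 — 2 statements merged into one kernel-verified Lean document; each statement's English description precedes it below -/
import Mathlib

section
/- Let (X_n, A_n)_{n∈ℕ} be measurable spaces and (κ_n : ∏_{i≤n} X_i ⇝ X_{n+1})_{n∈ℕ} Markov kernels. For all natural numbers a and b ≤ c, the pushforward of the partial-trajectory kernel η_{a,c} under the restriction map π_{c→b} : ∏_{i≤c} X_i → ∏_{i≤b} X_i equals η_{a,b}. -/
open MeasureTheory ProbabilityTheory Preorder Filter
open scoped ENNReal ProbabilityTheory Topology

variable {X : ℕ → Type*} [∀ n, MeasurableSpace (X n)]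

/-- Canonical map gluing a trajectory up to time `b` with a point of `X (b + 1)` into a
trajectory up to time `b + 1`. -/
def IicProdSucc (b : ℕ) (p : (Π i : Finset.Iic b, X i) × X (b + 1)) :
    Π i : Finset.Iic (b + 1), X i :=
  fun i ↦ if h : i.1 ≤ b then p.1 ⟨i.1, Finset.mem_Iic.2 h⟩
    else cast (congrArg X (Nat.le_antisymm (Finset.mem_Iic.1 i.2)
      (Nat.lt_of_not_le h))).symm p.2

/-- The partial trajectory kernel `η_{a,b}` built from the kernels `κ n`: for `b ≤ a` it is the
deterministic kernel given by the restriction map, and `η_{a,b+1}` is obtained from `η_{a,b}` by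
composing with the product of the identity kernel and `κ b`. -/
noncomputable def partialTraj (κ : ∀ n, Kernel (Π i : Finset.Iic n, X i) (X (n + 1))) (a : ℕ) :
    (b : ℕ) → Kernel (Π i : Finset.Iic a, X i) (Π i : Finset.Iic b, X i)
  | 0 => Kernel.deterministic (frestrictLe₂ (Nat.zero_le a)) (measurable_frestrictLe₂ _)
  | b + 1 =>
    if h : b + 1 ≤ a then Kernel.deterministic (frestrictLe₂ h) (measurable_frestrictLe₂ h)
    else ((Kernel.id ×ₖ κ b) ∘ₖ partialTraj κ a b).map (IicProdSucc b)

/-! By induction on `c` it suffices to restrict `η_{a,b+1}` to time `b`. Beyond time `a` that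
kernel glues the trajectory with a `κ b`-step, and forgetting the new coordinate leaves the first
marginal of `Kernel.id ×ₖ κ b`, which is `Kernel.id` because `κ b` is Markov. -/

namespace IicProdSucc

@[fun_prop]
lemma measurable (b : ℕ) : Measurable (IicProdSucc (X := X) b) := by
  refine measurable_pi_lambda _ fun ⟨i, hi⟩ ↦ ?_
  unfold IicProdSucc
  split_ifs with h
  · exact (measurable_pi_apply _).comp measurable_fst
  · obtain rfl : i = b + 1 := Nat.le_antisymm (Finset.mem_Iic.1 hi) (Nat.lt_of_not_le h)
    exact measurable_snd

lemma frestrictLe₂_comp {Y : ℕ → Type*} (b : ℕ) :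
    frestrictLe₂ (π := Y) b.le_succ ∘ IicProdSucc b = Prod.fst := by
  ext p i
  simp [IicProdSucc, Finset.mem_Iic.1 i.2]

end IicProdSucc

section partialTraj

variable (κ : ∀ n, Kernel (Π i : Finset.Iic n, X i) (X (n + 1)))

lemma partialTraj_of_le {a b : ℕ} (hba : b ≤ a) :
    partialTraj κ a b = Kernel.deterministic (frestrictLe₂ hba) (measurable_frestrictLe₂ hba) := by
  cases b with
  | zero => rfl
  | succ b => rw [partialTraj, dif_pos hba]

lemma partialTraj_succ_map_frestrictLe₂ [∀ n, IsMarkovKernel (κ n)] (a b : ℕ) :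
    (partialTraj κ a (b + 1)).map (frestrictLe₂ b.le_succ) = partialTraj κ a b := by
  by_cases hba : b + 1 ≤ a
  · rw [partialTraj_of_le κ hba, Kernel.deterministic_map _ (by fun_prop),
      partialTraj_of_le κ (by omega)]
    rfl
  · rw [partialTraj, dif_neg hba, ← Kernel.map_comp_right _ (by fun_prop) (by fun_prop),
      IicProdSucc.frestrictLe₂_comp, ← Kernel.fst_eq, Kernel.fst_comp, Kernel.fst_prod,
      Kernel.id_comp]

end partialTraj

/-- For `b ≤ c`, the pushforward of the partial trajectory kernel `η_{a,c}` under the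
restriction map `π_{c → b}` is `η_{a,b}`. -/
theorem partialTraj_map_frestrictLe₂ (κ : ∀ n, Kernel (Π i : Finset.Iic n, X i) (X (n + 1)))
    [∀ n, IsMarkovKernel (κ n)] (a : ℕ) {b c : ℕ} (hbc : b ≤ c) :
    (partialTraj κ a c).map (frestrictLe₂ hbc) = partialTraj κ a b := by
  induction c, hbc using Nat.le_induction with
  | base => exact Kernel.map_id _
  | succ c hbc ih =>
    rw [← ih, ← frestrictLe₂_comp_frestrictLe₂ hbc c.le_succ,
      Kernel.map_comp_right _ (by fun_prop) (by fun_prop), partialTraj_succ_map_frestrictLe₂]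
end

section
/- Let (X_n, A_n)_{n∈ℕ} be measurable spaces and (κ_n : ∏_{i≤n} X_i ⇝ X_{n+1})_{n∈ℕ} Markov kernels. For all a, b ∈ ℕ, the pushforward of the Ionescu–Tulcea trajectory kernel ξ_a : ∏_{i≤a} X_i ⇝ ∏_{n∈ℕ} X_n under the restriction map π_b : ∏_{n∈ℕ} X_n → ∏_{i≤b} X_i equals the partial-trajectory kernel η_{a,b}. -/
open MeasureTheory ProbabilityTheory Preorder Filter
open scoped ENNReal ProbabilityTheory Topology

variable {X : ℕ → Type*} [∀ n, MeasurableSpace (X n)]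

/-! The trajectory kernel is Mathlib's `Kernel.traj`. Its defining property is stated for
`Kernel.partialTraj`, which is built by the same recursion as `partialTraj` except that the new
coordinate is glued in as a function on `Ioc b (b + 1)` rather than as a point of `X (b + 1)`;
the two kernels therefore agree. -/

open Finset

lemma IicProdIoc_comp_prodMap_piSingleton (b : ℕ) :
    IicProdIoc b (b + 1) ∘ Prod.map id (MeasurableEquiv.piSingleton b) =
      IicProdSucc (X := X) b := by
  funext p ⟨i, hi⟩
  by_cases h : i ≤ b
  · simp [IicProdIoc, IicProdSucc, h]
  · obtain rfl : i = b + 1 := by grind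
    simp [IicProdIoc, IicProdSucc, MeasurableEquiv.piSingleton]

lemma partialTraj_eq_kernel_partialTraj (κ : ∀ n, Kernel (Π i : Iic n, X i) (X (n + 1)))
    [∀ n, IsSFiniteKernel (κ n)] (a b : ℕ) :
    partialTraj κ a b = Kernel.partialTraj κ a b := by
  induction b with
  | zero => rfl
  | succ b ih =>
    by_cases hba : b + 1 ≤ a
    · rw [Kernel.partialTraj_le hba, partialTraj, dif_pos hba]
    · have hglue : Measurable
          (Prod.map (id : (Π i : Iic b, X i) → _) (MeasurableEquiv.piSingleton (X := X) b)) :=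
        measurable_id.prodMap (MeasurableEquiv.piSingleton b).measurable
      rw [partialTraj, dif_neg hba, Kernel.partialTraj_succ_of_le (by omega), ih,
        ← IicProdIoc_comp_prodMap_piSingleton, Kernel.map_comp_right _ hglue measurable_IicProdIoc]
      congr 1
      rw [Kernel.map_comp, ← Kernel.map_prod_map _ _ measurable_id
        (MeasurableEquiv.piSingleton b).measurable, Kernel.map_id]

/-- The Ionescu-Tulcea trajectory kernels `ξ_a : Π i : Iic a, X i ⇝ Π n, X n` exist, and the
pushforward of `ξ_a` under the restriction map `π_b` is the partial trajectory kernel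
`η_{a,b}` for all `a b : ℕ`. -/
theorem exists_traj_map_frestrictLe (κ : ∀ n, Kernel (Π i : Finset.Iic n, X i) (X (n + 1)))
    [∀ n, IsMarkovKernel (κ n)] :
    ∃ ξ : ∀ a : ℕ, Kernel (Π i : Finset.Iic a, X i) (Π n, X n),
      (∀ a, IsMarkovKernel (ξ a)) ∧
      ∀ a b : ℕ, (ξ a).map (frestrictLe b) = partialTraj κ a b :=
  ⟨Kernel.traj κ, inferInstance, fun a b => by
    rw [Kernel.traj_map_frestrictLe, partialTraj_eq_kernel_partialTraj]⟩
end
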